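/- arXiv:2012.14150 — 3 statements merged into one kernel-verified Lean document; each statement's English description precedes it below -/
import Mathlib

section
/- The proportion of permutations of {1,...,k} that are decomposable (σ({1,...,j}) = {1,...,j} for some 1 ≤ j ≤ k-1) tends to 0 as k → ∞. -/
open Nat Filter

/-- A permutation `σ` of `{1,…,k}` is decomposable if for some `1 ≤ j ≤ k-1`,
`σ` maps `{1,…,j}` onto `{1,…,j}`. -/
def Decomposable {k : ℕ} (σ : Equiv.Perm (Fin k)) : Prop :=
  ∃ j : ℕ, 1 ≤ j ∧ j + 1 ≤ k ∧ ∀ i : Fin k, (i : ℕ) < j → ((σ i : ℕ) < j)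

/-!
A permutation mapping `{0, …, j-1}` into itself permutes it and its complement separately, so
there are exactly `j! (k-j)!` of them. A union bound over `j` bounds the number of decomposable
permutations of `Fin k` by `∑_{j=1}^{k-1} j! (k-j)!`. The two extreme terms are `(k-1)!` each,
and every other term is at most `2 (k-2)!`, since `j! (k-j)! = k! / (k choose j)` and
`(k choose j) ≥ (k choose 2)` there. Hence the count is at most `4 (k-1)!`, so the proportion is
at most `4 / k`.
-/

open Finset

theorem Equiv.Perm.apply_mem_iff_of_mapsTo {α : Type*} {s : Set α} (hs : s.Finite)
    {σ : Equiv.Perm α} (h : Set.MapsTo σ s s) (a : α) : σ a ∈ s ↔ a ∈ s := by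
  have himage : σ '' s = s := ((hs.injOn_iff_bijOn_of_mapsTo h).1 σ.injective.injOn).image_eq
  simpa only [himage] using σ.injective.mem_set_image (s := s) (a := a)

theorem Equiv.Perm.card_mapsTo_self {α : Type*} [Finite α] (s : Set α) :
    Nat.card {σ : Equiv.Perm α // Set.MapsTo σ s s} = s.ncard ! * sᶜ.ncard ! := by
  classical
  have key := DomMulAct.stabilizer_ncard (fun a => decide (a ∈ s))
  simp only [Fintype.prod_bool, decide_eq_true_eq, decide_eq_false_iff_not] at key
  rw [Set.ofPred_mem_eq, ← Set.compl_def] at key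
  rw [← key]
  refine Nat.card_congr (Equiv.subtypeEquivRight fun σ => ?_)
  exact ⟨fun h => funext fun a => by simp [σ.apply_mem_iff_of_mapsTo s.toFinite h a],
    fun h a => (by simpa using congrFun h a : σ a ∈ s ↔ a ∈ s).2⟩

theorem card_perm_fin_mapsTo_lt {k j : ℕ} (hjk : j ≤ k) :
    Nat.card {σ : Equiv.Perm (Fin k) // ∀ i : Fin k, (i : ℕ) < j → (σ i : ℕ) < j} =
      j ! * (k - j)! := by
  have hj : {i : Fin k | (i : ℕ) < j}.ncard = j := by
    simp [Set.ncard_eq_toFinset_card', Fin.card_filter_val_lt, hjk]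
  exact (Equiv.Perm.card_mapsTo_self {i : Fin k | (i : ℕ) < j}).trans
    (by rw [Set.ncard_compl, hj, Nat.card_fin])

theorem factorial_add_two_mul_factorial_add_two_le (a b : ℕ) :
    (a + 2)! * (b + 2)! ≤ 2 * (a + b + 2)! := by
  induction a with
  | zero => simp [Nat.factorial]
  | succ a ih =>
    calc (a + 1 + 2)! * (b + 2)! = (a + 3) * ((a + 2)! * (b + 2)!) := by
          rw [show a + 1 + 2 = a + 2 + 1 by ring, Nat.factorial_succ]; ring
      _ ≤ (a + b + 3) * (2 * (a + b + 2)!) := Nat.mul_le_mul (by omega) ih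
      _ = 2 * (a + 1 + b + 2)! := by
          rw [show a + 1 + b + 2 = a + b + 2 + 1 by ring, Nat.factorial_succ (a + b + 2)]; ring

theorem sum_antidiagonal_factorial_succ_mul_le (n : ℕ) :
    ∑ p ∈ antidiagonal n, (p.1 + 1)! * (p.2 + 1)! ≤ 4 * (n + 1)! := by
  match n with
  | 0 => decide
  | 1 => decide
  | m + 2 =>
    rw [Nat.sum_antidiagonal_succ, Nat.sum_antidiagonal_succ']
    have hmid : ∑ p ∈ antidiagonal m, (p.1 + 2)! * (p.2 + 2)! ≤ (m + 1) * (2 * (m + 2)!) :=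
      calc _ ≤ ∑ p ∈ antidiagonal m, 2 * (m + 2)! := sum_le_sum fun p hp => by
              rw [HasAntidiagonal.mem_antidiagonal] at hp
              exact hp ▸ factorial_add_two_mul_factorial_add_two_le p.1 p.2
        _ = _ := by rw [sum_const, Nat.card_antidiagonal, smul_eq_mul]
    have hfac : (m + 3)! = (m + 3) * (m + 2)! := Nat.factorial_succ _
    simp only [zero_add, Nat.factorial_one, one_mul, mul_one] at hmid ⊢
    linarith

theorem card_decomposable_le_four_mul_factorial (n : ℕ) :
    Nat.card {σ : Equiv.Perm (Fin (n + 2)) // Decomposable σ} ≤ 4 * (n + 1)! := by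
  classical
  let Stab (j : ℕ) : Finset (Equiv.Perm (Fin (n + 2))) :=
    univ.filter fun σ => ∀ i : Fin (n + 2), (i : ℕ) < j → (σ i : ℕ) < j
  have hcover : univ.filter Decomposable ⊆ (antidiagonal n).biUnion fun p => Stab (p.1 + 1) := by
    rintro σ hσ
    obtain ⟨j, hj1, hjk, hmaps⟩ := (mem_filter.1 hσ).2
    refine mem_biUnion.2 ⟨(j - 1, n + 1 - j), ?_, ?_⟩
    · rw [HasAntidiagonal.mem_antidiagonal]; omega
    · simpa [Stab, Nat.sub_add_cancel hj1] using hmaps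
  have hstab : ∀ p ∈ antidiagonal n, #(Stab (p.1 + 1)) = (p.1 + 1)! * (p.2 + 1)! := by
    intro p hp
    rw [HasAntidiagonal.mem_antidiagonal] at hp
    rw [← Fintype.card_subtype, ← Nat.card_eq_fintype_card, card_perm_fin_mapsTo_lt (by omega),
      show n + 2 - (p.1 + 1) = p.2 + 1 by omega]
  calc Nat.card {σ : Equiv.Perm (Fin (n + 2)) // Decomposable σ}
      = #(univ.filter Decomposable) := by rw [Nat.card_eq_fintype_card, Fintype.card_subtype]
    _ ≤ ∑ p ∈ antidiagonal n, #(Stab (p.1 + 1)) := (card_le_card hcover).trans card_biUnion_le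
    _ = ∑ p ∈ antidiagonal n, (p.1 + 1)! * (p.2 + 1)! := sum_congr rfl hstab
    _ ≤ 4 * (n + 1)! := sum_antidiagonal_factorial_succ_mul_le n

/-- The proportion of permutations of `{1,…,k}` that are decomposable tends to `0`
as `k → ∞`. -/
theorem stmt6 :
    Tendsto
      (fun k : ℕ =>
        (Nat.card {σ : Equiv.Perm (Fin k) // Decomposable σ} : ℝ) / ((k ! : ℕ) : ℝ))
      atTop (nhds 0) := by
  refine squeeze_zero' (Eventually.of_forall fun k => by positivity)
    ((eventually_ge_atTop 2).mono fun k hk => ?_) (tendsto_const_div_atTop_nhds_zero_nat 4)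
  obtain ⟨n, rfl⟩ := Nat.exists_eq_add_of_le' hk
  have hcount : (Nat.card {σ : Equiv.Perm (Fin (n + 2)) // Decomposable σ} : ℝ) ≤ 4 * (n + 1)! := by
    exact_mod_cast card_decomposable_le_four_mul_factorial n
  rw [div_le_div_iff₀ (by positivity) (by positivity), Nat.factorial_succ]
  push_cast
  linarith [mul_le_mul_of_nonneg_right hcount (by positivity : (0 : ℝ) ≤ n + 2)]
end

section
/- Let P be a 2-dimensional 0-1 matrix of dimensions r × s, and let P_d be the d-dimensional 0-1 matrix of dimensions r × s × 1 × ... × 1 with entry (i,j,1,...,1) equal to 1 iff entry (i,j) of P is 1. If A is an n × n 0-1 matrix saturating for P, then the d-dimensional n × ... × n 0-1 matrix B defined by B(x_1,...,x_d) = A(x_1,x_2) is saturating for P_d, hence sat(n, P_d, d) ≤ n^{d-2} · sat(n, P). -/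
open Nat Finset Filter

/-- 0-1 matrix `A` contains 0-1 matrix `P`: some submatrix of `A`, with rows and
columns chosen in increasing order, has ones wherever `P` has ones. -/
def Contains {r s n m : ℕ} (P : Fin r → Fin s → Bool) (A : Fin n → Fin m → Bool) : Prop :=
  ∃ f : Fin r → Fin n, ∃ g : Fin s → Fin m,
    StrictMono f ∧ StrictMono g ∧ ∀ i j, P i j = true → A (f i) (g j) = true

/-- The matrix obtained from `A` by changing entry `(i, j)` to a one. -/
def flipEntry {n m : ℕ} (A : Fin n → Fin m → Bool) (i : Fin n) (j : Fin m) :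
    Fin n → Fin m → Bool :=
  fun i' j' => if i' = i ∧ j' = j then true else A i' j'

/-- `A` is saturating for `P`: `A` avoids `P`, but changing any zero of `A` to a one
creates a copy of `P`. -/
def Saturating {r s n m : ℕ} (P : Fin r → Fin s → Bool) (A : Fin n → Fin m → Bool) : Prop :=
  ¬ Contains P A ∧ ∀ i j, A i j = false → Contains P (flipEntry A i j)

/-- Number of one entries of a 0-1 matrix. -/
def onesCount {n m : ℕ} (A : Fin n → Fin m → Bool) : ℕ :=
  (Finset.univ.filter fun p : Fin n × Fin m => A p.1 p.2 = true).card

/-- `sat n P`: minimum possible number of ones in an `n × n` 0-1 matrix saturating for `P`. -/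
noncomputable def sat (n : ℕ) {r s : ℕ} (P : Fin r → Fin s → Bool) : ℕ :=
  sInf {m | ∃ A : Fin n → Fin n → Bool, Saturating P A ∧ onesCount A = m}

/-- A `d`-dimensional 0-1 matrix of side `n` whose extra `d - 2 = e` dimensions are
indexed by `Fin e → Fin n`. Containment of the `d`-dimensional embedding `P_d` of a
2-dimensional pattern `P` (of dimensions `r × s × 1 × ⋯ × 1`): strictly increasing
row and column selections together with one index in each extra dimension
(strict monotonicity is vacuous on an index set of size one). -/
def DContains {r s n e : ℕ} (P : Fin r → Fin s → Bool)
    (B : Fin n → Fin n → (Fin e → Fin n) → Bool) : Prop :=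
  ∃ f : Fin r → Fin n, ∃ g : Fin s → Fin n, ∃ z : Fin e → Fin n,
    StrictMono f ∧ StrictMono g ∧ ∀ i j, P i j = true → B (f i) (g j) z = true

/-- Changing the entry of a `d`-dimensional 0-1 matrix at `(i, j, z)` to a one. -/
def dFlipEntry {n e : ℕ} (B : Fin n → Fin n → (Fin e → Fin n) → Bool)
    (i j : Fin n) (z : Fin e → Fin n) : Fin n → Fin n → (Fin e → Fin n) → Bool :=
  fun i' j' z' => if i' = i ∧ j' = j ∧ z' = z then true else B i' j' z'

/-- `B` is saturating for the `d`-dimensional embedding `P_d` of `P`. -/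
def DSaturating {r s n e : ℕ} (P : Fin r → Fin s → Bool)
    (B : Fin n → Fin n → (Fin e → Fin n) → Bool) : Prop :=
  ¬ DContains P B ∧ ∀ i j z, B i j z = false → DContains P (dFlipEntry B i j z)

/-- Number of one entries of a `d`-dimensional 0-1 matrix. -/
def onesCountD {n e : ℕ} (B : Fin n → Fin n → (Fin e → Fin n) → Bool) : ℕ :=
  (Finset.univ.filter fun p : Fin n × Fin n × (Fin e → Fin n) => B p.1 p.2.1 p.2.2 = true).card

/-- `dsat n e P = sat(n, P_d, d)` with `e = d - 2`: minimum number of ones in a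
`d`-dimensional 0-1 matrix of side `n` saturating for `P_d`. -/
noncomputable def dsat (n e : ℕ) {r s : ℕ} (P : Fin r → Fin s → Bool) : ℕ :=
  sInf {m | ∃ B : Fin n → Fin n → (Fin e → Fin n) → Bool, DSaturating P B ∧ onesCountD B = m}

lemma dsat_aux_saturating {r s n e : ℕ} (P : Fin r → Fin s → Bool) (A : Fin n → Fin n → Bool)
    (hA : Saturating P A) :
    DSaturating P (fun x₁ x₂ (_ : Fin e → Fin n) => A x₁ x₂) := by
  constructor
  · rintro ⟨f, g, z, hf, hg, h⟩
    exact hA.1 ⟨f, g, hf, hg, h⟩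
  · intro i j z hij
    obtain ⟨f, g, hf, hg, h⟩ := hA.2 i j hij
    refine ⟨f, g, z, hf, hg, ?_⟩
    intro a b hab
    have := h a b hab
    simp only [flipEntry] at this
    simp only [dFlipEntry]
    split
    · rfl
    · next hcond =>
      rw [if_neg] at this
      · exact this
      · intro ⟨h1, h2⟩; exact hcond ⟨h1, h2, trivial⟩

lemma dsat_aux_count {n e : ℕ} (A : Fin n → Fin n → Bool) :
    onesCountD (fun x₁ x₂ (_ : Fin e → Fin n) => A x₁ x₂) = n ^ e * onesCount A := by
  unfold onesCountD onesCount
  rw [← Fintype.card_subtype, ← Fintype.card_subtype]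
  have eqv : {p : Fin n × Fin n × (Fin e → Fin n) // A p.1 p.2.1 = true} ≃
      (Fin e → Fin n) × {q : Fin n × Fin n // A q.1 q.2 = true} :=
    { toFun := fun p => (p.1.2.2, ⟨(p.1.1, p.1.2.1), p.2⟩)
      invFun := fun q => ⟨(q.2.1.1, q.2.1.2, q.1), q.2.2⟩
      left_inv := fun p => rfl
      right_inv := fun q => rfl }
  rw [Fintype.card_congr eqv, Fintype.card_prod, Fintype.card_fun, Fintype.card_fin,
    Fintype.card_fin]

/-- If `A` is an `n × n` matrix saturating for `P`, then the `d`-dimensional matrix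
`B(x₁,…,x_d) = A(x₁,x₂)` is saturating for `P_d`; hence
`sat(n, P_d, d) ≤ n^(d-2) · sat(n, P)` (here `e = d - 2`). -/
theorem stmt10 {r s n e : ℕ} (P : Fin r → Fin s → Bool) (A : Fin n → Fin n → Bool)
    (hA : Saturating P A) :
    DSaturating P (fun x₁ x₂ (_ : Fin e → Fin n) => A x₁ x₂) ∧
    dsat n e P ≤ n ^ e * sat n P := by
  have hB := dsat_aux_saturating (e := e) P A hA
  refine ⟨hB, ?_⟩
  have hne : {m | ∃ A' : Fin n → Fin n → Bool, Saturating P A' ∧ onesCount A' = m}.Nonempty :=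
    ⟨onesCount A, A, hA, rfl⟩
  obtain ⟨A', hA', hcount⟩ := Nat.sInf_mem hne
  have hB' := dsat_aux_saturating (e := e) P A' hA'
  calc dsat n e P ≤ onesCountD (fun x₁ x₂ (_ : Fin e → Fin n) => A' x₁ x₂) :=
        Nat.sInf_le ⟨_, hB', rfl⟩
    _ = n ^ e * onesCount A' := dsat_aux_count A'
    _ = n ^ e * sat n P := by rw [hcount]; rfl
end

section
/- Let P be an r × s 0-1 matrix and P_d its d-dimensional embedding (dimensions r × s × 1 × ... × 1). Then sat(n, P_d, d) ≥ n^{d-2} · sat(n, P): any d-dimensional n × ... × n 0-1 matrix C saturating for P_d has, for each fixed choice of coordinates (x_3,...,x_d), a 2-dimensional slice that is an n × n matrix saturating for P, and hence C has at least n^{d-2} · sat(n, P) ones. -/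
open Nat Finset Filter

/-!
A copy of `P_d` lives in a single slice `z` of the extra coordinates, so `C` avoids `P_d` exactly
when every slice avoids `P`; and flipping a zero in slice `z` only changes that slice, so the new
copy of `P_d` must lie in slice `z`. Each of the `n ^ e` slices is therefore saturating for `P`
and carries at least `sat n P` ones.
-/

section Slices

variable {r s n e : ℕ} {P : Fin r → Fin s → Bool} {B : Fin n → Fin n → (Fin e → Fin n) → Bool}

theorem dContains_iff_exists_contains_slice :
    DContains P B ↔ ∃ z, Contains P (fun i j => B i j z) := by
  constructor
  · rintro ⟨f, g, z, hf, hg, h⟩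
    exact ⟨z, f, g, hf, hg, h⟩
  · rintro ⟨z, f, g, hf, hg, h⟩
    exact ⟨f, g, z, hf, hg, h⟩

theorem dFlipEntry_slice_self (i j : Fin n) (z : Fin e → Fin n) :
    (fun i' j' => dFlipEntry B i j z i' j' z) = flipEntry (fun i' j' => B i' j' z) i j := by
  ext i' j'
  simp [dFlipEntry, flipEntry]

theorem dFlipEntry_slice_of_ne {i j : Fin n} {z z' : Fin e → Fin n} (hz : z' ≠ z) :
    (fun i' j' => dFlipEntry B i j z i' j' z') = fun i' j' => B i' j' z' := by
  ext i' j'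
  simp [dFlipEntry, hz]

theorem DSaturating.saturating_slice (hB : DSaturating P B) (z : Fin e → Fin n) :
    Saturating P (fun i j => B i j z) := by
  refine ⟨fun h => hB.1 (dContains_iff_exists_contains_slice.2 ⟨z, h⟩), fun i j hij => ?_⟩
  obtain ⟨z', hz'⟩ := dContains_iff_exists_contains_slice.1 (hB.2 i j z hij)
  by_cases hz : z' = z
  · subst hz
    rwa [dFlipEntry_slice_self] at hz'
  · rw [dFlipEntry_slice_of_ne hz] at hz'
    exact absurd (dContains_iff_exists_contains_slice.2 ⟨z', hz'⟩) hB.1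

theorem onesCountD_eq_sum_onesCount_slice (B : Fin n → Fin n → (Fin e → Fin n) → Bool) :
    onesCountD B = ∑ z, onesCount (fun i j => B i j z) := by
  simp only [onesCountD, onesCount, Finset.card_filter, Fintype.sum_prod_type]
  exact (Finset.sum_congr rfl fun _ _ => Finset.sum_comm).trans Finset.sum_comm

end Slices

theorem sat_le_onesCount {r s n : ℕ} {P : Fin r → Fin s → Bool} {A : Fin n → Fin n → Bool}
    (hA : Saturating P A) : sat n P ≤ onesCount A :=
  Nat.sInf_le ⟨A, hA, rfl⟩

theorem DSaturating.pow_mul_sat_le_onesCountD {r s n e : ℕ} {P : Fin r → Fin s → Bool}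
    {B : Fin n → Fin n → (Fin e → Fin n) → Bool} (hB : DSaturating P B) :
    n ^ e * sat n P ≤ onesCountD B :=
  calc n ^ e * sat n P = ∑ _z : Fin e → Fin n, sat n P := by simp
    _ ≤ ∑ z, onesCount (fun i j => B i j z) :=
      Finset.sum_le_sum fun z _ => sat_le_onesCount (hB.saturating_slice z)
    _ = onesCountD B := (onesCountD_eq_sum_onesCount_slice B).symm

/-- If `C` is a `d`-dimensional side-`n` 0-1 matrix saturating for `P_d`, then every
2-dimensional slice of `C` (with the last `d-2` coordinates fixed) is an `n × n`
matrix saturating for `P`; hence `C` has at least `n^(d-2) · sat(n, P)` ones, and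
`sat(n, P_d, d) ≥ n^(d-2) · sat(n, P)` (here `e = d - 2`). -/
theorem stmt11 {r s n e : ℕ} (P : Fin r → Fin s → Bool)
    (C : Fin n → Fin n → (Fin e → Fin n) → Bool) (hC : DSaturating P C) :
    (∀ z : Fin e → Fin n, Saturating P (fun i j => C i j z)) ∧
    n ^ e * sat n P ≤ onesCountD C ∧
    n ^ e * sat n P ≤ dsat n e P := by
  refine ⟨hC.saturating_slice, hC.pow_mul_sat_le_onesCountD, ?_⟩
  refine le_csInf ⟨_, C, hC, rfl⟩ ?_
  rintro m ⟨B, hB, rfl⟩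
  exact hB.pow_mul_sat_le_onesCountD
end
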